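/- arXiv:1112.5524 — 2 statements merged into one kernel-verified Lean document; each statement's English description precedes it below -/
import Mathlib

section
/- For every k ≥ 1, the number of binary words of length k not containing 0110110 as a contiguous substring is at most γ^{k+1}, where γ := (2⁷ − 1)^{1/7}. -/
/-- The pattern `0110110` as a binary word over `Bool` (`false` = 0, `true` = 1). -/
def pattern0110110 : List Bool := [false, true, true, false, true, true, false]

/-!
A word of length `m + n` avoiding `p` splits into a prefix of length `m` and a suffix of length
`n` which both avoid `p`, so the counts `a k` of `p`-avoiding words are submultiplicative. For
`p = 0110110` this gives `a (k + 7) ≤ 127 * a k = γ⁷ * a k`, and the bound `a k ≤ γ^(k+1)` follows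
by induction on `k` from the cases `1 ≤ k ≤ 7`, where `a k ≤ 2^k ≤ γ^(k+1)`.
-/

namespace List

variable {α : Type*}

theorem ncard_setOf_length_eq [Fintype α] (n : ℕ) :
    {l : List α | l.length = n}.ncard = Fintype.card α ^ n := by
  rw [← Nat.card_coe_set_eq, ← card_vector, ← Nat.card_eq_fintype_card]
  rfl

def avoiding (p : List α) (k : ℕ) : Set (List α) := {l | l.length = k ∧ ¬ p <:+: l}

variable (p : List α)

theorem avoiding_subset_setOf_length_eq (k : ℕ) : avoiding p k ⊆ {l | l.length = k} :=
  fun _ hl => hl.1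

theorem finite_avoiding [Finite α] (k : ℕ) : (avoiding p k).Finite :=
  (finite_length_eq α k).subset (avoiding_subset_setOf_length_eq p k)

theorem ncard_avoiding_le [Fintype α] (k : ℕ) :
    (avoiding p k).ncard ≤ Fintype.card α ^ k :=
  ncard_setOf_length_eq (α := α) k ▸
    Set.ncard_le_ncard (avoiding_subset_setOf_length_eq p k) (finite_length_eq α k)

theorem avoiding_length_self : avoiding p p.length = {l | l.length = p.length} \ {p} := by
  ext l
  simp only [avoiding, Set.mem_ofPred_eq, Set.mem_sdiff, Set.mem_singleton_iff,
    and_congr_right_iff]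
  intro hl
  exact not_congr ⟨fun h => (h.eq_of_length hl.symm).symm, fun h => h ▸ infix_refl l⟩

theorem ncard_avoiding_length_self [Fintype α] :
    (avoiding p p.length).ncard = Fintype.card α ^ p.length - 1 := by
  have hp : p ∈ {l : List α | l.length = p.length} := rfl
  rw [avoiding_length_self, Set.ncard_sdiff_singleton_of_mem hp, ncard_setOf_length_eq]

theorem ncard_avoiding_add_le [Finite α] (m n : ℕ) :
    (avoiding p (m + n)).ncard ≤ (avoiding p m).ncard * (avoiding p n).ncard := by
  rw [← Set.ncard_prod]
  refine Set.ncard_le_ncard_of_injOn (fun l => (l.take m, l.drop m)) ?_ ?_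
    ((finite_avoiding p m).prod (finite_avoiding p n))
  · rintro l ⟨hl, hp⟩
    exact ⟨⟨by simp [hl], fun h => hp (h.trans (take_prefix m l).isInfix)⟩,
      ⟨by simp [hl], fun h => hp (h.trans (drop_suffix m l).isInfix)⟩⟩
  · intro l₁ _ l₂ _ h
    simp only [Prod.mk.injEq] at h
    rw [← take_append_drop m l₁, ← take_append_drop m l₂, h.1, h.2]

end List

theorem le_pow_succ_of_le_pow_mul {a : ℕ → ℝ} {γ : ℝ} {n : ℕ} (hγ : 0 ≤ γ) (hn : 0 < n)
    (hstep : ∀ k, a (k + n) ≤ γ ^ n * a k)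
    (hbase : ∀ k, 1 ≤ k → k ≤ n → a k ≤ γ ^ (k + 1)) :
    ∀ k, 1 ≤ k → a k ≤ γ ^ (k + 1) := by
  intro k
  induction k using Nat.strong_induction_on with
  | _ k ih =>
    intro hk
    rcases le_or_gt k n with hkn | hnk
    · exact hbase k hk hkn
    obtain ⟨m, rfl⟩ : ∃ m, k = m + n := ⟨k - n, by omega⟩
    calc a (m + n) ≤ γ ^ n * a m := hstep m
      _ ≤ γ ^ n * γ ^ (m + 1) := by gcongr; exact ih m (by omega) (by omega)
      _ = γ ^ (m + n + 1) := by ring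

theorem two_pow_le_pow_succ {γ : ℝ} (hγ : 0 ≤ γ) (hγ7 : γ ^ 7 = 2 ^ 7 - 1) {k : ℕ}
    (hk : 1 ≤ k) (hk7 : k ≤ 7) : (2 : ℝ) ^ k ≤ γ ^ (k + 1) := by
  refine le_of_pow_le_pow_left₀ (n := 7) (by norm_num) (pow_nonneg hγ _) ?_
  rw [← pow_mul γ, mul_comm, pow_mul, hγ7]
  interval_cases k <;> norm_num

/-- For every `k ≥ 1`, the number of binary words of length `k` not containing
`0110110` as a contiguous substring is at most `γ^{k+1}`, where `γ = (2⁷ - 1)^{1/7}`. -/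
theorem avoid_count (k : ℕ) (hk : 1 ≤ k) :
    (({l : List Bool | l.length = k ∧ ¬ pattern0110110 <:+: l} :
        Set (List Bool)).ncard : ℝ) ≤ ((2 ^ 7 - 1 : ℝ) ^ ((1 : ℝ) / 7)) ^ (k + 1) := by
  have hγ7 : ((2 ^ 7 - 1 : ℝ) ^ ((1 : ℝ) / 7)) ^ 7 = 2 ^ 7 - 1 := by
    rw [one_div]
    exact_mod_cast Real.rpow_inv_natCast_pow (n := 7) (by norm_num) (by norm_num)
  set γ : ℝ := (2 ^ 7 - 1 : ℝ) ^ ((1 : ℝ) / 7)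
  have hγ : 0 ≤ γ := by positivity
  have hpattern : ((pattern0110110.avoiding 7).ncard : ℝ) = γ ^ 7 := by
    rw [hγ7, show (pattern0110110.avoiding 7).ncard = 2 ^ 7 - 1 from
      pattern0110110.ncard_avoiding_length_self]
    norm_num
  have hstep (k : ℕ) : ((pattern0110110.avoiding (k + 7)).ncard : ℝ) ≤
      γ ^ 7 * (pattern0110110.avoiding k).ncard := by
    rw [← hpattern, mul_comm]
    exact_mod_cast pattern0110110.ncard_avoiding_add_le k 7
  have hbase (k : ℕ) (hk : 1 ≤ k) (hk7 : k ≤ 7) :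
      ((pattern0110110.avoiding k).ncard : ℝ) ≤ γ ^ (k + 1) :=
    calc ((pattern0110110.avoiding k).ncard : ℝ) ≤ 2 ^ k := by
          exact_mod_cast pattern0110110.ncard_avoiding_le k
      _ ≤ γ ^ (k + 1) := two_pow_le_pow_succ hγ hγ7 hk hk7
  exact le_pow_succ_of_le_pow_mul hγ (by norm_num) hstep hbase k hk
end

section
/- Let f(q) denote the number of c-spread sequences of length q with f(0):=1. Then for q ≥ c+1, f(q) ≤ f(q−1) + 2·∑_{z=c}^{q−1} 2^{z/c}·f(q−z−1). -/
/-!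
Cut a `c`-spread sequence after the block that contains its first entry. If the first entry is
a `1` that does not open the left block of some entry, deleting it leaves a `c`-spread sequence
of length `q - 1`. Otherwise the first `z + 1` entries are a single entry `r ≥ 2` with
`⌈c log₂ r⌉ = z` together with its `z` ones, the entry standing either first (right block) or
last (left block), and the remaining `q - z - 1` entries are again `c`-spread: a later left block
reaching back across the cut would have to use the entry at position `z`, which is either `r`
itself or a `1` already assigned to `r`. Since `z ≥ c` and `r ≤ 2^{z/c}`, each of the two shapes
contributes at most `2^{z/c} f(q - z - 1)` sequences.
-/

/-- A sequence `s` of positive integers of length `q` is `c`-spread if each entry equal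
to `1` can be mapped (by a partial assignment `f`) to an entry greater than `1`, such
that every entry `s i ≥ 2` has at least `⌈c log₂ (s i)⌉` entries, either all
immediately before it or all immediately after it, that equal `1` and are mapped
to it. -/
def CSpread (c : ℕ) {q : ℕ} (s : Fin q → ℕ) : Prop :=
  (∀ i, 1 ≤ s i) ∧ ∃ f : Fin q → Option (Fin q),
    (∀ i j, f i = some j → s i = 1 ∧ 2 ≤ s j) ∧
    ∀ i : Fin q, 2 ≤ s i →
      ((⌈(c : ℝ) * Real.logb 2 (s i)⌉₊ ≤ (i : ℕ) ∧
        ∀ j : Fin q, (i : ℕ) - ⌈(c : ℝ) * Real.logb 2 (s i)⌉₊ ≤ (j : ℕ) → (j : ℕ) < (i : ℕ) →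
          s j = 1 ∧ f j = some i) ∨
       ((i : ℕ) + ⌈(c : ℝ) * Real.logb 2 (s i)⌉₊ < q ∧
        ∀ j : Fin q, (i : ℕ) < (j : ℕ) → (j : ℕ) ≤ (i : ℕ) + ⌈(c : ℝ) * Real.logb 2 (s i)⌉₊ →
          s j = 1 ∧ f j = some i))

/-- The number of `c`-spread sequences of length `q` (equal to `1` when `q = 0`). -/
noncomputable def fC (c q : ℕ) : ℕ :=
  ({s : Fin q → ℕ | CSpread c s} : Set (Fin q → ℕ)).ncard

open Finset

noncomputable def spreadLength (c r : ℕ) : ℕ := ⌈(c : ℝ) * Real.logb 2 r⌉₊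

theorem le_spreadLength {c r : ℕ} (hr : 2 ≤ r) : c ≤ spreadLength c r := by
  have hlog : 1 ≤ Real.logb 2 r := by
    rw [Real.le_logb_iff_rpow_le one_lt_two (by positivity)]
    simpa using (Nat.cast_le (α := ℝ)).2 hr
  exact_mod_cast (le_mul_of_one_le_right (Nat.cast_nonneg c) hlog).trans (Nat.le_ceil _)

theorem le_two_rpow_spreadLength_div {c r : ℕ} (hc : 0 < c) (hr : 0 < r) :
    (r : ℝ) ≤ 2 ^ ((spreadLength c r : ℝ) / c) := by
  rw [← Real.logb_le_iff_le_rpow one_lt_two (by positivity), le_div_iff₀ (by positivity), mul_comm]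
  exact Nat.le_ceil _

section Assignment

variable {c q : ℕ} (c)

def LeftBlock (s : Fin q → ℕ) (f : Fin q → Option (Fin q)) (i : Fin q) : Prop :=
  spreadLength c (s i) ≤ i ∧ ∀ j : Fin q, (i : ℕ) - spreadLength c (s i) ≤ j → (j : ℕ) < i →
    s j = 1 ∧ f j = some i

def RightBlock (s : Fin q → ℕ) (f : Fin q → Option (Fin q)) (i : Fin q) : Prop :=
  (i : ℕ) + spreadLength c (s i) < q ∧
    ∀ j : Fin q, (i : ℕ) < j → (j : ℕ) ≤ i + spreadLength c (s i) → s j = 1 ∧ f j = some i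

def IsSpreadAssignment (s : Fin q → ℕ) (f : Fin q → Option (Fin q)) : Prop :=
  (∀ i j, f i = some j → s i = 1 ∧ 2 ≤ s j) ∧
    ∀ i, 2 ≤ s i → LeftBlock c s f i ∨ RightBlock c s f i

variable {c}

theorem cSpread_iff {s : Fin q → ℕ} :
    CSpread c s ↔ (∀ i, 1 ≤ s i) ∧ ∃ f, IsSpreadAssignment c s f :=
  Iff.rfl

theorem LeftBlock.spreadLength_lt {s : Fin q → ℕ} {f i} (h : LeftBlock c s f i) :
    spreadLength c (s i) < q :=
  h.1.trans_lt i.isLt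

theorem RightBlock.spreadLength_lt {s : Fin q → ℕ} {f i} (h : RightBlock c s f i) :
    spreadLength c (s i) < q := by
  have := h.1; omega

theorem LeftBlock.add_spreadLength_lt {s : Fin q → ℕ} {f i} (h : LeftBlock c s f i) {m : Fin q}
    (hmi : m < i) (hm : ¬(s m = 1 ∧ f m = some i)) : (m : ℕ) + spreadLength c (s i) < i := by
  by_contra! hreach
  exact hm (h.2 m (by omega) hmi)

theorem CSpread.le_two_pow {s : Fin q → ℕ} (hc : 0 < c) (hs : CSpread c s) (i : Fin q) :
    s i ≤ 2 ^ q := by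
  obtain ⟨hpos, f, -, hblocks⟩ := hs
  rcases lt_or_ge (s i) 2 with hsmall | hbig
  · exact hsmall.le.trans (Nat.one_lt_two_pow_iff.2 (by have := i.isLt; omega))
  have hlen : spreadLength c (s i) ≤ q :=
    ((hblocks i hbig).elim LeftBlock.spreadLength_lt RightBlock.spreadLength_lt).le
  have : (s i : ℝ) ≤ 2 ^ (q : ℝ) := calc
    (s i : ℝ) ≤ 2 ^ ((spreadLength c (s i) : ℝ) / c) := le_two_rpow_spreadLength_div hc (hpos i)
    _ ≤ 2 ^ (q : ℝ) := by
      gcongr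
      · norm_num
      · exact (div_le_self (by positivity) (by exact_mod_cast hc)).trans (by exact_mod_cast hlen)
  exact_mod_cast (Real.rpow_natCast (2 : ℝ) q) ▸ this

theorem cSpread_finite (hc : 0 < c) (q : ℕ) : {s : Fin q → ℕ | CSpread c s}.Finite :=
  (Set.finite_Iic (fun _ => 2 ^ q)).subset fun _ hs i => hs.le_two_pow hc i

theorem fC_zero_left (hq : 0 < q) : fC 0 q = 0 := by
  refine Set.Infinite.ncard (Set.infinite_of_injective_forall_mem
    (f := fun n : ℕ => fun _ : Fin q => n + 1) (fun a b h => by simpa using congrFun h ⟨0, hq⟩)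
    fun n => ⟨fun _ => Nat.le_add_left 1 n, fun _ => none, by simp, fun i _ => Or.inl ?_⟩)
  refine ⟨by simp, fun j hj hji => ?_⟩
  simp only [CharP.cast_eq_zero, zero_mul, Nat.ceil_zero, Nat.sub_zero] at hj
  omega

end Assignment

section Tail

variable {c q k : ℕ}

def tailEmb (k : ℕ) (i : Fin (q - k)) : Fin q :=
  ⟨i + k, by omega⟩

def dropPrefix (k : ℕ) (s : Fin q → ℕ) : Fin (q - k) → ℕ :=
  s ∘ tailEmb k

def untail (k : ℕ) (j : Fin q) : Option (Fin (q - k)) :=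
  if h : k ≤ (j : ℕ) then some ⟨j - k, by omega⟩ else none

def shiftAssignment (k : ℕ) (f : Fin q → Option (Fin q)) (i : Fin (q - k)) :
    Option (Fin (q - k)) :=
  (f (tailEmb k i)).bind (untail k)

@[simp] theorem tailEmb_val (i : Fin (q - k)) : (tailEmb k i : ℕ) = i + k := rfl

@[simp] theorem dropPrefix_apply (s : Fin q → ℕ) (i : Fin (q - k)) :
    dropPrefix k s i = s (tailEmb k i) := rfl

theorem untail_eq_some_iff {j : Fin q} {i : Fin (q - k)} :
    untail k j = some i ↔ tailEmb k i = j := by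
  unfold untail
  split_ifs with h
  · simp only [Option.some.injEq, Fin.ext_iff, tailEmb_val]
    omega
  · simp only [false_iff, Fin.ext_iff, tailEmb_val]
    omega

theorem shiftAssignment_eq_some_iff {f : Fin q → Option (Fin q)} {i j : Fin (q - k)} :
    shiftAssignment k f i = some j ↔ f (tailEmb k i) = some (tailEmb k j) := by
  simp [shiftAssignment, Option.bind_eq_some_iff, untail_eq_some_iff]

theorem eq_of_dropPrefix_eq {s t : Fin q → ℕ} (hpre : ∀ j : Fin q, (j : ℕ) < k → s j = t j)
    (htail : dropPrefix k s = dropPrefix k t) : s = t := by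
  funext j
  by_cases hj : (j : ℕ) < k
  · exact hpre j hj
  obtain ⟨i, rfl⟩ : ∃ i, tailEmb k i = j :=
    ⟨⟨j - k, by omega⟩, Fin.ext (by simp only [tailEmb_val]; omega)⟩
  exact congrFun htail i

variable {s : Fin q → ℕ} {f : Fin q → Option (Fin q)} {i : Fin (q - k)}

theorem LeftBlock.dropPrefix (h : LeftBlock c s f (tailEmb k i))
    (hcut : k + spreadLength c (s (tailEmb k i)) ≤ tailEmb k i) :
    LeftBlock c (dropPrefix k s) (shiftAssignment k f) i := by
  simp only [tailEmb_val] at hcut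
  refine ⟨by simp only [dropPrefix_apply]; omega, fun j hj hji => ?_⟩
  simp only [dropPrefix_apply] at hj ⊢
  obtain ⟨hone, hf⟩ := h.2 (tailEmb k j) (by simp only [tailEmb_val]; omega)
    (by simp only [tailEmb_val]; omega)
  exact ⟨hone, shiftAssignment_eq_some_iff.2 hf⟩

theorem RightBlock.dropPrefix (h : RightBlock c s f (tailEmb k i)) :
    RightBlock c (dropPrefix k s) (shiftAssignment k f) i := by
  have hlen := h.1
  simp only [tailEmb_val] at hlen
  refine ⟨by simp only [dropPrefix_apply]; omega, fun j hij hj => ?_⟩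
  simp only [dropPrefix_apply] at hj ⊢
  obtain ⟨hone, hf⟩ := h.2 (tailEmb k j) (by simp only [tailEmb_val]; omega)
    (by simp only [tailEmb_val]; omega)
  exact ⟨hone, shiftAssignment_eq_some_iff.2 hf⟩

theorem IsSpreadAssignment.cSpread_dropPrefix (hpos : ∀ i, 1 ≤ s i)
    (hf : IsSpreadAssignment c s f)
    (hcut : ∀ i : Fin q, k ≤ i → 2 ≤ s i → LeftBlock c s f i → k + spreadLength c (s i) ≤ i) :
    CSpread c (dropPrefix k s) :=
  ⟨fun _ => hpos _, shiftAssignment k f,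
    fun _ _ hij => hf.1 _ _ (shiftAssignment_eq_some_iff.1 hij),
    fun i hi => (hf.2 _ hi).imp (fun h => h.dropPrefix (hcut _ (by simp) hi h))
      RightBlock.dropPrefix⟩

end Tail

section Decomposition

variable {c q : ℕ} {s : Fin q → ℕ} {f : Fin q → Option (Fin q)}

def HasBlockPrefix (c z p : ℕ) (s : Fin q → ℕ) : Prop :=
  ∀ j : Fin q, (j : ℕ) ≤ z →
    ((j : ℕ) = p → 2 ≤ s j ∧ spreadLength c (s j) = z) ∧ ((j : ℕ) ≠ p → s j = 1)

theorem IsSpreadAssignment.blockPrefix_of_two_le_head (hc : 0 < c) (hpos : ∀ i, 1 ≤ s i)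
    (hf : IsSpreadAssignment c s f) (hq : 0 < q) (h0 : 2 ≤ s ⟨0, hq⟩) :
    spreadLength c (s ⟨0, hq⟩) < q ∧ HasBlockPrefix c (spreadLength c (s ⟨0, hq⟩)) 0 s ∧
      CSpread c (dropPrefix (spreadLength c (s ⟨0, hq⟩) + 1) s) := by
  have hcz := le_spreadLength (c := c) h0
  obtain ⟨hlt, hblock⟩ : RightBlock c s f ⟨0, hq⟩ :=
    (hf.2 _ h0).resolve_left fun h => by have := h.1; simp only at this; omega
  simp only [zero_add] at hlt hblock
  refine ⟨hlt, fun j hj => ⟨fun hj0 => ?_, fun hj0 => (hblock j (by omega) hj).1⟩,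
    hf.cSpread_dropPrefix hpos fun i hi _ hL => ?_⟩
  · obtain rfl : j = ⟨0, hq⟩ := Fin.ext hj0
    exact ⟨h0, rfl⟩
  · have hm : ¬(s ⟨_, hlt⟩ = 1 ∧ f ⟨_, hlt⟩ = some i) := fun h => by
      have hi0 := Option.some_inj.1
        (h.2.symm.trans (hblock ⟨_, hlt⟩ (by simp only; omega) le_rfl).2)
      subst hi0
      simp at hi
    have := hL.add_spreadLength_lt (Fin.lt_def.2 (by simp only; omega)) hm
    simp only at this
    omega

theorem IsSpreadAssignment.blockPrefix_of_leftBlock_eq (hpos : ∀ i, 1 ≤ s i)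
    (hf : IsSpreadAssignment c s f) {i : Fin q} (hi : 2 ≤ s i) (hL : LeftBlock c s f i)
    (hz : spreadLength c (s i) = i) :
    HasBlockPrefix c i i s ∧ CSpread c (dropPrefix (i + 1) s) := by
  refine ⟨fun j hj => ⟨fun hji => ?_, fun hji => (hL.2 j (by omega) (by omega)).1⟩,
    hf.cSpread_dropPrefix hpos fun i' hi' _ hL' => ?_⟩
  · obtain rfl : j = i := Fin.ext hji
    exact ⟨hi, hz⟩
  · have := hL'.add_spreadLength_lt (m := i) (Fin.lt_def.2 (by omega)) fun h => by omega
    omega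

theorem IsSpreadAssignment.cSpread_dropPrefix_one (hpos : ∀ i, 1 ≤ s i)
    (hf : IsSpreadAssignment c s f)
    (hstart : ∀ i, 2 ≤ s i → LeftBlock c s f i → spreadLength c (s i) ≠ i) :
    CSpread c (dropPrefix 1 s) :=
  hf.cSpread_dropPrefix hpos fun i _ hbig hL => by
    have := hL.1
    have := hstart i hbig hL
    omega

theorem CSpread.cover (hc : 0 < c) (hq : 0 < q) (hs : CSpread c s) :
    (s ⟨0, hq⟩ = 1 ∧ CSpread c (dropPrefix 1 s)) ∨
      ∃ z ∈ Icc c (q - 1), ∃ p ∈ ({0, z} : Finset ℕ),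
        HasBlockPrefix c z p s ∧ CSpread c (dropPrefix (z + 1) s) := by
  obtain ⟨hpos, f, hf⟩ := cSpread_iff.1 hs
  rcases lt_or_ge (s ⟨0, hq⟩) 2 with h0 | h0
  · by_cases hstart : ∃ i, 2 ≤ s i ∧ LeftBlock c s f i ∧ spreadLength c (s i) = i
    · obtain ⟨i, hi, hL, hz⟩ := hstart
      exact Or.inr ⟨i, mem_Icc.2 ⟨hz ▸ le_spreadLength hi, by omega⟩, i, by simp,
        hf.blockPrefix_of_leftBlock_eq hpos hi hL hz⟩
    · push Not at hstart
      exact Or.inl ⟨by have := hpos ⟨0, hq⟩; omega, hf.cSpread_dropPrefix_one hpos hstart⟩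
  · obtain ⟨hlt, hpre, htail⟩ := hf.blockPrefix_of_two_le_head hc hpos hq h0
    exact Or.inr ⟨_, mem_Icc.2 ⟨le_spreadLength h0, by omega⟩, 0, by simp, hpre, htail⟩

end Decomposition

section Counting

variable {c q : ℕ}

theorem ncard_le_card_mul_fC (hc : 0 < c) {k : ℕ} {B : Set (Fin q → ℕ)} (p : Fin q)
    (S : Finset ℕ) (hmaps : ∀ s ∈ B, s p ∈ S ∧ CSpread c (dropPrefix k s))
    (hpre : ∀ s ∈ B, ∀ t ∈ B, s p = t p → ∀ j : Fin q, (j : ℕ) < k → s j = t j) :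
    B.Finite ∧ B.ncard ≤ #S * fC c (q - k) := by
  have hmapsTo : Set.MapsTo (fun s => (s p, dropPrefix k s)) B
      ((S : Set ℕ) ×ˢ {u | CSpread c u}) := hmaps
  have hinj : Set.InjOn (fun s => (s p, dropPrefix k s)) B := fun s hs t ht hst =>
    eq_of_dropPrefix_eq (hpre s hs t ht (congrArg Prod.fst hst)) (congrArg Prod.snd hst)
  have hfin := S.finite_toSet.prod (cSpread_finite hc (q - k))
  refine ⟨hfin.of_injOn hmapsTo hinj, ?_⟩
  have := Set.ncard_le_ncard_of_injOn _ hmapsTo hinj hfin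
  rwa [Set.ncard_prod, Set.ncard_coe_finset] at this

theorem ncard_headOne_le (hc : 0 < c) (hq : 0 < q) :
    {s : Fin q → ℕ | s ⟨0, hq⟩ = 1 ∧ CSpread c (dropPrefix 1 s)}.Finite ∧
      {s : Fin q → ℕ | s ⟨0, hq⟩ = 1 ∧ CSpread c (dropPrefix 1 s)}.ncard ≤ fC c (q - 1) := by
  simpa using ncard_le_card_mul_fC hc ⟨0, hq⟩ {1} (fun s hs => ⟨by simp [hs.1], hs.2⟩)
    fun s hs t ht _ j hj => by
      obtain rfl : j = ⟨0, hq⟩ := Fin.ext (Nat.lt_one_iff.1 hj)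
      rw [hs.1, ht.1]

theorem ncard_blockPrefix_le (hc : 0 < c) {z p : ℕ} (hz : z < q) (hp : p ≤ z) :
    {s : Fin q → ℕ | HasBlockPrefix c z p s ∧ CSpread c (dropPrefix (z + 1) s)}.Finite ∧
      {s : Fin q → ℕ | HasBlockPrefix c z p s ∧ CSpread c (dropPrefix (z + 1) s)}.ncard ≤
        ⌊(2 : ℝ) ^ ((z : ℝ) / c)⌋₊ * fC c (q - z - 1) := by
  have hmaps : ∀ s ∈ {s : Fin q → ℕ | HasBlockPrefix c z p s ∧ CSpread c (dropPrefix (z + 1) s)},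
      s ⟨p, by omega⟩ ∈ Icc 1 ⌊(2 : ℝ) ^ ((z : ℝ) / c)⌋₊ ∧ CSpread c (dropPrefix (z + 1) s) := by
    rintro s ⟨hpre, htail⟩
    obtain ⟨hbig, hlen⟩ := (hpre ⟨p, by omega⟩ hp).1 rfl
    refine ⟨mem_Icc.2 ⟨by omega, Nat.le_floor ?_⟩, htail⟩
    simpa [hlen] using le_two_rpow_spreadLength_div hc (by omega : 0 < s ⟨p, _⟩)
  have := ncard_le_card_mul_fC hc _ _ hmaps fun s hs t ht hst j hj => by
    by_cases hjp : (j : ℕ) = p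
    · rwa [show j = ⟨p, by omega⟩ from Fin.ext hjp]
    · rw [(hs.1 j (by omega)).2 hjp, (ht.1 j (by omega)).2 hjp]
  exact ⟨this.1, by simpa only [Nat.card_Icc, Nat.add_sub_cancel, Nat.sub_sub] using this.2⟩

theorem fC_le_sum (hc : 0 < c) (hq : 0 < q) :
    fC c q ≤ fC c (q - 1) +
      ∑ z ∈ Icc c (q - 1), 2 * (⌊(2 : ℝ) ^ ((z : ℝ) / c)⌋₊ * fC c (q - z - 1)) := by
  set A := {s : Fin q → ℕ | s ⟨0, hq⟩ = 1 ∧ CSpread c (dropPrefix 1 s)}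
  set P := fun z p => {s : Fin q → ℕ | HasBlockPrefix c z p s ∧ CSpread c (dropPrefix (z + 1) s)}
  have hA := ncard_headOne_le hc hq
  have hP : ∀ z ∈ Icc c (q - 1), ∀ p ∈ ({0, z} : Finset ℕ), (P z p).Finite ∧
      (P z p).ncard ≤ ⌊(2 : ℝ) ^ ((z : ℝ) / c)⌋₊ * fC c (q - z - 1) := fun z hz p hp => by
    rw [mem_Icc] at hz
    exact ncard_blockPrefix_le hc (by omega) (by simp at hp; omega)
  have hcover : {s : Fin q → ℕ | CSpread c s} ⊆
      A ∪ ⋃ z ∈ Icc c (q - 1), ⋃ p ∈ ({0, z} : Finset ℕ), P z p := fun s hs => by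
      rcases hs.cover hc hq with hhead | ⟨z, hz, p, hp, hblock⟩
      · exact Or.inl hhead
      · exact Or.inr (Set.mem_iUnion₂.2 ⟨z, hz, Set.mem_iUnion₂.2 ⟨p, hp, hblock⟩⟩)
  have hfin : (A ∪ ⋃ z ∈ Icc c (q - 1), ⋃ p ∈ ({0, z} : Finset ℕ), P z p).Finite :=
    hA.1.union (Set.Finite.biUnion (Icc c (q - 1)).finite_toSet fun z hz =>
      Set.Finite.biUnion (Finset.finite_toSet _) fun p hp => (hP z hz p hp).1)
  calc fC c q ≤ (A ∪ ⋃ z ∈ Icc c (q - 1), ⋃ p ∈ ({0, z} : Finset ℕ), P z p).ncard :=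
        Set.ncard_le_ncard hcover hfin
    _ ≤ A.ncard + ∑ z ∈ Icc c (q - 1), ∑ p ∈ ({0, z} : Finset ℕ), (P z p).ncard :=
        (Set.ncard_union_le _ _).trans (Nat.add_le_add_left ((set_ncard_biUnion_le _ _).trans
          (sum_le_sum fun z _ => set_ncard_biUnion_le _ _)) _)
    _ ≤ _ := add_le_add hA.2 <| sum_le_sum fun z hz =>
        (sum_le_sum fun p hp => (hP z hz p hp).2).trans
          (by rw [sum_const, smul_eq_mul]; gcongr; exact card_le_two)

end Counting

/-- For `q ≥ c + 1`,
`f(q) ≤ f(q-1) + 2 ∑_{z=c}^{q-1} 2^{z/c} f(q-z-1)`. -/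
theorem cspread_recursion (c : ℕ) (q : ℕ) (hq : c + 1 ≤ q) :
    (fC c q : ℝ) ≤ (fC c (q - 1) : ℝ) +
      2 * ∑ z ∈ Finset.Icc c (q - 1),
        (2 : ℝ) ^ ((z : ℝ) / (c : ℝ)) * (fC c (q - z - 1) : ℝ) := by
  rcases Nat.eq_zero_or_pos c with rfl | hc
  · -- every positive sequence is `0`-spread, and `Set.ncard` is `0` on infinite sets
    rw [fC_zero_left (by omega), Nat.cast_zero]
    positivity
  calc (fC c q : ℝ)
      ≤ fC c (q - 1) +
          ∑ z ∈ Icc c (q - 1), 2 * (⌊(2 : ℝ) ^ ((z : ℝ) / c)⌋₊ * fC c (q - z - 1)) := by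
        exact_mod_cast fC_le_sum hc (by omega)
    _ ≤ _ := by
      push_cast
      rw [mul_sum]
      gcongr with z
      exact Nat.floor_le (by positivity)
end
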